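/- Let φ = (1+√5)/2 and let X ⊂ S² be the 20-point vertex set of the regular dodecahedron inscribed in the unit sphere, consisting of the eight points (±1, ±1, ±1)/√3 together with all cyclic permutations of the coordinates of (0, ±1/φ, ±φ)/√3; its maximum pairwise inner product is α = √5/3. Then for every unit vector y ∈ S² with y ∉ X, there exists x ∈ X with ⟨x,y⟩ > √5/3; i.e., adjoining any new point of S² to X strictly increases the maximum pairwise inner product. -/

import Mathlib

open scoped RealInnerProductSpace

/-- The golden ratio `(1 + √5)/2`. -/
noncomputable def gr : ℝ := (1 + Real.sqrt 5) / 2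

/-- Vertex set of the regular dodecahedron inscribed in the unit sphere:
the eight points `(±1, ±1, ±1)/√3` together with all cyclic permutations of the
coordinates of `(0, ±1/φ, ±φ)/√3`. -/
noncomputable def dodecahedron : Set (EuclideanSpace ℝ (Fin 3)) :=
  {v | (∀ i, v i = (Real.sqrt 3)⁻¹ ∨ v i = -(Real.sqrt 3)⁻¹) ∨
    ∃ s t : ℝ, (s = 1 ∨ s = -1) ∧ (t = 1 ∨ t = -1) ∧
      ((v 0 = 0 ∧ v 1 = s * gr⁻¹ * (Real.sqrt 3)⁻¹ ∧ v 2 = t * gr * (Real.sqrt 3)⁻¹) ∨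
       (v 1 = 0 ∧ v 2 = s * gr⁻¹ * (Real.sqrt 3)⁻¹ ∧ v 0 = t * gr * (Real.sqrt 3)⁻¹) ∨
       (v 2 = 0 ∧ v 0 = s * gr⁻¹ * (Real.sqrt 3)⁻¹ ∧ v 1 = t * gr * (Real.sqrt 3)⁻¹))}

/-!
Up to the factor `1/√3`, the absolute values of the coordinates of a vertex form one of the four
patterns `(1,1,1)`, `(0,φ⁻¹,φ)`, `(φ,0,φ⁻¹)`, `(φ⁻¹,φ,0)`, and every choice of signs occurs.
Two vertices with different patterns have `⟪x, y⟫ ≤ ∑ |xᵢ||yᵢ| ≤ √5/3`. Two distinct vertices with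
the same pattern have opposite signs in some nonzero coordinate, which lowers the inner product from
`1` by at least `2φ⁻²/3`, and `1 - 2φ⁻²/3 = √5/3`. For the second claim, choosing the signs of
a vertex to match those of `y` reduces to `y` in the positive octant, where one of the four forms
`∑ pᵢ |yᵢ|` exceeds `1.3 > √5/√3`.
-/

open Real goldenRatio Finset

lemma real_inner_eq_sum_mul {ι : Type*} [Fintype ι] (x y : EuclideanSpace ℝ ι) :
    ⟪x, y⟫ = ∑ i, x i * y i := by
  simp [PiLp.inner_apply, mul_comm]

lemma exists_ne_zero_and_eq_neg_of_abs_eq {ι : Type*} {x y : ι → ℝ} (h : ∀ j, |x j| = |y j|)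
    (hne : x ≠ y) : ∃ i, x i ≠ 0 ∧ y i = -x i := by
  obtain ⟨i, hi⟩ := Function.ne_iff.1 hne
  rcases abs_eq_abs.1 (h i) with e | e
  · exact absurd e hi
  · exact ⟨i, fun h0 => hi (by linarith), by linarith⟩

lemma sum_mul_le_sum_sq_sub_of_abs_eq {ι : Type*} [Fintype ι] {x y : ι → ℝ}
    (h : ∀ j, |x j| = |y j|) {i : ι} (hi : y i = -x i) :
    ∑ j, x j * y j ≤ ∑ j, x j ^ 2 - 2 * x i ^ 2 := by
  have hterm : ∀ j, 0 ≤ x j ^ 2 - x j * y j := fun j => by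
    have : x j * y j ≤ x j ^ 2 := by
      calc x j * y j ≤ |x j| * |y j| := by rw [← abs_mul]; exact le_abs_self _
        _ = x j ^ 2 := by rw [← h j, ← sq, sq_abs]
    linarith
  have hi_le : x i ^ 2 - x i * y i ≤ ∑ j, (x j ^ 2 - x j * y j) :=
    single_le_sum (fun j _ => hterm j) (mem_univ i)
  rw [sum_sub_distrib, hi] at hi_le
  linarith

lemma exists_abs_eq_and_mul_eq (u : ℝ) {w : ℝ} (hw : 0 ≤ w) : ∃ z, |z| = w ∧ z * u = w * |u| := by
  rcases le_total 0 u with h | h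
  · exact ⟨w, abs_of_nonneg hw, by rw [abs_of_nonneg h]⟩
  · exact ⟨-w, by rw [abs_neg, abs_of_nonneg hw], by rw [abs_of_nonpos h]; ring⟩

lemma abs_eq_iff_exists_sign_mul {u w : ℝ} (hw : 0 ≤ w) :
    |u| = w ↔ ∃ s : ℝ, (s = 1 ∨ s = -1) ∧ u = s * w := by
  rw [abs_eq hw]
  constructor
  · rintro (h | h)
    · exact ⟨1, Or.inl rfl, by rw [h, one_mul]⟩
    · exact ⟨-1, Or.inr rfl, by rw [h, neg_one_mul]⟩
  · rintro ⟨s, rfl | rfl, rfl⟩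
    · exact Or.inl (one_mul w)
    · exact Or.inr (neg_one_mul w)

lemma gr_eq_goldenRatio : gr = φ := rfl

lemma gr_pos : 0 < gr := goldenRatio_pos

lemma inv_gr_pos : 0 < gr⁻¹ := inv_pos.2 gr_pos

lemma gr_mul_inv_gr : gr * gr⁻¹ = 1 := mul_inv_cancel₀ gr_pos.ne'

lemma inv_gr : gr⁻¹ = gr - 1 := by
  rw [gr_eq_goldenRatio, inv_goldenRatio, ← one_sub_goldenConj]
  ring

lemma inv_gr_add_gr : gr⁻¹ + gr = √5 := by
  rw [inv_gr, gr]
  ring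

lemma inv_gr_sq_add_gr_sq : gr⁻¹ ^ 2 + gr ^ 2 = 3 := by
  rw [inv_gr, gr_eq_goldenRatio]
  linear_combination 2 * goldenRatio_sq

lemma three_sub_two_mul_inv_gr_sq : 3 - 2 * gr⁻¹ ^ 2 = √5 := by
  rw [inv_gr, gr_eq_goldenRatio]
  linear_combination -2 * goldenRatio_sq + goldenRatio_sub_goldenConj

lemma one_le_sqrt_five : 1 ≤ √5 := by
  rw [one_le_sqrt]; norm_num

lemma inv_sqrt_three_pos : 0 < (√3)⁻¹ := inv_pos.2 (sqrt_pos.2 (by norm_num))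

lemma inv_sqrt_three_sq : (√3)⁻¹ ^ 2 = 1 / 3 := by
  rw [inv_pow, sq_sqrt (by norm_num : (0 : ℝ) ≤ 3), one_div]

lemma sqrt_five_div_three_lt : √5 / 3 < 13 / 10 * (√3)⁻¹ := by
  have h3 : √3 ^ 2 = 3 := sq_sqrt (by norm_num)
  have h5 : √5 ^ 2 = 5 := sq_sqrt (by norm_num)
  have hlt : 10 * √5 < 13 * √3 := by
    refine lt_of_pow_lt_pow_left₀ 2 (by positivity) ?_
    rw [mul_pow, mul_pow, h3, h5]
    norm_num
  have hpos : 0 < √3 := sqrt_pos.2 (by norm_num)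
  rw [← div_eq_mul_inv, div_lt_div_iff₀ (by norm_num) (by positivity)]
  nlinarith

noncomputable def vertexProfile : Fin 4 → Fin 3 → ℝ :=
  ![![1, 1, 1], ![0, gr⁻¹, gr], ![gr, 0, gr⁻¹], ![gr⁻¹, gr, 0]]

lemma vertexProfile_nonneg (k : Fin 4) (i : Fin 3) : 0 ≤ vertexProfile k i := by
  fin_cases k <;> fin_cases i <;> simp [vertexProfile, gr_pos.le]

lemma inv_gr_le_vertexProfile {k : Fin 4} {i : Fin 3} (h : vertexProfile k i ≠ 0) :
    gr⁻¹ ≤ vertexProfile k i := by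
  have : gr⁻¹ ≤ 1 := inv_le_one_of_one_le₀ one_lt_goldenRatio.le
  have : gr⁻¹ ≤ gr := by rw [inv_gr]; linarith
  fin_cases k <;> fin_cases i <;> simp_all [vertexProfile]

lemma sum_vertexProfile_sq (k : Fin 4) : ∑ i, vertexProfile k i ^ 2 = 3 := by
  fin_cases k <;> simp [vertexProfile, Fin.sum_univ_three, -inv_pow] <;>
    linarith [inv_gr_sq_add_gr_sq]

lemma sum_vertexProfile_zero_mul_one : ∑ i, vertexProfile 0 i * vertexProfile 1 i = √5 := by
  simp [vertexProfile, Fin.sum_univ_three, inv_gr_add_gr]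

lemma sum_vertexProfile_mul_le {j k : Fin 4} (h : j ≠ k) :
    ∑ i, vertexProfile j i * vertexProfile k i ≤ √5 := by
  have := one_le_sqrt_five
  fin_cases j <;> fin_cases k <;>
    simp_all [vertexProfile, Fin.sum_univ_three, inv_gr_add_gr, add_comm gr,
      gr_mul_inv_gr, inv_mul_cancel₀ gr_pos.ne']

/-- The largest of the four forms is at least about `1.376` on the octant (attained at the face
centres), so crude bounds on `φ` suffice. -/
lemma exists_lt_sum_vertexProfile_mul {a : Fin 3 → ℝ} (ha : ∀ i, 0 ≤ a i)
    (h : ∑ i, a i ^ 2 = 1) : ∃ k, 13 / 10 < ∑ i, vertexProfile k i * a i := by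
  by_contra! hle
  have hgr : 1618 / 1000 ≤ gr := by
    have : 2236 / 1000 ≤ √5 := le_sqrt_of_sq_le (by norm_num)
    rw [gr]; linarith
  have h0 := hle 0
  have h1 := hle 1
  have h2 := hle 2
  have h3 := hle 3
  simp only [vertexProfile, Fin.sum_univ_three, inv_gr, Matrix.cons_val] at h h0 h1 h2 h3
  have ha0 := ha 0
  have ha1 := ha 1
  have ha2 := ha 2
  have g1 : 618 / 1000 * a 1 + 1618 / 1000 * a 2 ≤ 13 / 10 := by nlinarith
  have g2 : 618 / 1000 * a 2 + 1618 / 1000 * a 0 ≤ 13 / 10 := by nlinarith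
  have g3 : 618 / 1000 * a 0 + 1618 / 1000 * a 1 ≤ 13 / 10 := by nlinarith
  nlinarith [mul_nonneg (sub_nonneg.2 h0) (sub_nonneg.2 g2),
    mul_nonneg (sub_nonneg.2 g1) (sub_nonneg.2 g3), mul_nonneg (sub_nonneg.2 h0) ha2,
    mul_nonneg (sub_nonneg.2 g1) ha2, mul_nonneg (sub_nonneg.2 g2) ha0,
    mul_nonneg (sub_nonneg.2 g3) ha1, mul_nonneg ha1 ha2]

lemma mem_dodecahedron_iff {v : EuclideanSpace ℝ (Fin 3)} :
    v ∈ dodecahedron ↔ ∃ k, ∀ i, |v i| = vertexProfile k i * (√3)⁻¹ := by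
  have hc := inv_sqrt_three_pos
  have abs_sign : ∀ {s : ℝ}, (s = 1 ∨ s = -1) → |s| = 1 := by rintro s (rfl | rfl) <;> simp
  constructor
  · rintro (hcube | ⟨s, t, hs, ht, hperm⟩)
    · refine ⟨0, fun i => ?_⟩
      have : vertexProfile 0 i = 1 := by fin_cases i <;> rfl
      rw [this, one_mul, abs_eq hc.le]
      exact hcube i
    have habs : |s * gr⁻¹ * (√3)⁻¹| = gr⁻¹ * (√3)⁻¹ ∧ |t * gr * (√3)⁻¹| = gr * (√3)⁻¹ := by
      simp [abs_mul, abs_sign hs, abs_sign ht, abs_of_pos gr_pos, abs_of_pos hc]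
    rcases hperm with ⟨e0, e1, e2⟩ | ⟨e1, e2, e0⟩ | ⟨e2, e0, e1⟩
    · exact ⟨1, fun i => by fin_cases i <;> simp [vertexProfile, e0, e1, e2, habs]⟩
    · exact ⟨2, fun i => by fin_cases i <;> simp [vertexProfile, e0, e1, e2, habs]⟩
    · exact ⟨3, fun i => by fin_cases i <;> simp [vertexProfile, e0, e1, e2, habs]⟩
  · rintro ⟨k, hk⟩
    have hsign : ∀ i, ∃ s : ℝ, (s = 1 ∨ s = -1) ∧ v i = s * (vertexProfile k i * (√3)⁻¹) :=
      fun i => (abs_eq_iff_exists_sign_mul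
        (mul_nonneg (vertexProfile_nonneg k i) hc.le)).1 (hk i)
    choose s hs hv using hsign
    match k, hv with
    | 0, hv =>
      refine Or.inl fun i => ?_
      have : vertexProfile 0 i = 1 := by fin_cases i <;> rfl
      rw [hv i, this, one_mul]
      rcases hs i with h | h <;> simp [h]
    | 1, hv =>
      exact Or.inr ⟨s 1, s 2, hs 1, hs 2, Or.inl ⟨by simpa [vertexProfile] using hv 0,
        by rw [hv 1, mul_assoc]; rfl, by rw [hv 2, mul_assoc]; rfl⟩⟩
    | 2, hv =>
      exact Or.inr ⟨s 2, s 0, hs 2, hs 0, Or.inr (Or.inl ⟨by simpa [vertexProfile] using hv 1,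
        by rw [hv 2, mul_assoc]; rfl, by rw [hv 0, mul_assoc]; rfl⟩)⟩
    | 3, hv =>
      exact Or.inr ⟨s 0, s 1, hs 0, hs 1, Or.inr (Or.inr ⟨by simpa [vertexProfile] using hv 2,
        by rw [hv 0, mul_assoc]; rfl, by rw [hv 1, mul_assoc]; rfl⟩)⟩

lemma sum_sq_of_mem_dodecahedron {x : EuclideanSpace ℝ (Fin 3)} (hx : x ∈ dodecahedron) :
    ∑ i, x i ^ 2 = 1 := by
  obtain ⟨k, hk⟩ := mem_dodecahedron_iff.1 hx
  simp_rw [← sq_abs (x _), hk, mul_pow, inv_sqrt_three_sq, ← sum_mul, sum_vertexProfile_sq]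
  norm_num

lemma inner_le_of_mem_dodecahedron {x y : EuclideanSpace ℝ (Fin 3)} (hx : x ∈ dodecahedron)
    (hy : y ∈ dodecahedron) (hxy : x ≠ y) : ⟪x, y⟫ ≤ √5 / 3 := by
  obtain ⟨j, hj⟩ := mem_dodecahedron_iff.1 hx
  obtain ⟨k, hk⟩ := mem_dodecahedron_iff.1 hy
  rw [real_inner_eq_sum_mul]
  by_cases hjk : j = k
  · subst hjk
    have habs : ∀ i, |x i| = |y i| := fun i => (hj i).trans (hk i).symm
    obtain ⟨i, hi0, hi⟩ :=
      exists_ne_zero_and_eq_neg_of_abs_eq habs fun h => hxy (WithLp.ofLp_injective 2 h)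
    have hxi : gr⁻¹ * (√3)⁻¹ ≤ |x i| := by
      have hP : vertexProfile j i ≠ 0 := fun h => hi0 (abs_eq_zero.1 (by rw [hj, h, zero_mul]))
      rw [hj]
      gcongr
      exact inv_gr_le_vertexProfile hP
    calc ∑ i, x i * y i ≤ ∑ i, x i ^ 2 - 2 * x i ^ 2 :=
          sum_mul_le_sum_sq_sub_of_abs_eq habs hi
      _ ≤ 1 - 2 * (gr⁻¹ * (√3)⁻¹) ^ 2 := by
          have := pow_le_pow_left₀ (mul_pos inv_gr_pos inv_sqrt_three_pos).le hxi 2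
          rw [sum_sq_of_mem_dodecahedron hx, ← sq_abs (x i)]
          linarith
      _ = √5 / 3 := by
          rw [mul_pow, inv_sqrt_three_sq, ← three_sub_two_mul_inv_gr_sq]
          ring
  · calc ∑ i, x i * y i ≤ ∑ i, |x i| * |y i| :=
          sum_le_sum fun i _ => by rw [← abs_mul]; exact le_abs_self _
      _ = (∑ i, vertexProfile j i * vertexProfile k i) * (√3)⁻¹ ^ 2 := by
          simp_rw [hj, hk, sum_mul]
          exact sum_congr rfl fun i _ => by ring
      _ ≤ √5 / 3 := by
          rw [inv_sqrt_three_sq]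
          linarith [sum_vertexProfile_mul_le hjk]

lemma exists_mem_dodecahedron_inner_gt {y : EuclideanSpace ℝ (Fin 3)} (hy : ‖y‖ = 1) :
    ∃ x ∈ dodecahedron, √5 / 3 < ⟪x, y⟫ := by
  have hsq : ∑ i, |y i| ^ 2 = 1 := by
    simp_rw [sq_abs, ← EuclideanSpace.real_norm_sq_eq, hy, one_pow]
  obtain ⟨k, hk⟩ := exists_lt_sum_vertexProfile_mul (fun i => abs_nonneg (y i)) hsq
  choose z hz hzy using fun i => exists_abs_eq_and_mul_eq (y i)
    (mul_nonneg (vertexProfile_nonneg k i) inv_sqrt_three_pos.le)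
  refine ⟨WithLp.toLp 2 z, mem_dodecahedron_iff.2 ⟨k, hz⟩, ?_⟩
  have hc := inv_sqrt_three_pos
  calc √5 / 3 < 13 / 10 * (√3)⁻¹ := sqrt_five_div_three_lt
    _ < (∑ i, vertexProfile k i * |y i|) * (√3)⁻¹ := by gcongr
    _ = ⟪WithLp.toLp 2 z, y⟫ := by
        simp only [real_inner_eq_sum_mul, hzy, sum_mul]
        exact sum_congr rfl fun i _ => by ring

lemma exists_pair_mem_dodecahedron_inner_eq :
    ∃ x ∈ dodecahedron, ∃ y ∈ dodecahedron, x ≠ y ∧ ⟪x, y⟫ = √5 / 3 := by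
  have hc := inv_sqrt_three_pos
  have hmem : ∀ k, WithLp.toLp 2 (fun i => vertexProfile k i * (√3)⁻¹) ∈ dodecahedron :=
    fun k => mem_dodecahedron_iff.2
      ⟨k, fun i => abs_of_nonneg (mul_nonneg (vertexProfile_nonneg k i) hc.le)⟩
  refine ⟨_, hmem 0, _, hmem 1, fun h => ?_, ?_⟩
  · have h0 := congrArg (fun v : EuclideanSpace ℝ (Fin 3) => v 0) h
    simp [vertexProfile, hc.ne'] at h0
  · rw [real_inner_eq_sum_mul]
    calc ∑ i, vertexProfile 0 i * (√3)⁻¹ * (vertexProfile 1 i * (√3)⁻¹)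
        = (∑ i, vertexProfile 0 i * vertexProfile 1 i) * (√3)⁻¹ ^ 2 := by
          rw [sum_mul]
          exact sum_congr rfl fun i _ => by ring
      _ = √5 / 3 := by rw [sum_vertexProfile_zero_mul_one, inv_sqrt_three_sq]; ring

/-- The regular dodecahedron inscribed in the unit sphere has maximum pairwise inner product `α = Real.sqrt 5 / 3`,
and adjoining any new unit vector strictly increases the maximum pairwise inner product:
every unit vector `y ∉ X` has `⟪x, y⟫ > α` for some vertex `x`. -/
theorem stmt_18 :
    IsGreatest {r : ℝ | ∃ x ∈ dodecahedron, ∃ y ∈ dodecahedron, x ≠ y ∧ ⟪x, y⟫ = r} (Real.sqrt 5 / 3) ∧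
      ∀ y : EuclideanSpace ℝ (Fin 3), ‖y‖ = 1 → y ∉ dodecahedron →
        ∃ x ∈ dodecahedron, ⟪x, y⟫ > (Real.sqrt 5 / 3) := by
  refine ⟨⟨exists_pair_mem_dodecahedron_inner_eq, ?_⟩,
    fun y hy _ => exists_mem_dodecahedron_inner_gt hy⟩
  rintro r ⟨x, hx, y, hy, hxy, rfl⟩
  exact inner_le_of_mem_dodecahedron hx hy hxy
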